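/- Let 0<α≤1, q>1 and w ∈ A_q. Then there exists a constant C>0, independent of k and f, such that for every locally integrable function f and every integer k ≥ 1, ‖S_{α,2ᵏ}(f)‖_{L²_w} ≤ C·2^{knq/2}·‖S_α(f)‖_{L²_w}. -/

import Mathlib

/-!
By Fubini, `‖S_{α,β}(f)‖²_{L²_w} = ∫₀^∞ ∫ A_α(f)(y,t)² w(B(y,βt)) dy dt/t^{n+1}`, so the aperture
enters only through the `w`-measure of the balls `B(y,βt)`. For `w ∈ A_q`, Hölder's inequality and
the `A_q` condition give `w(Q) |E|^q ≤ C |Q|^q w(E)` for `E ⊆ Q`; squeezing `B(y,2ᵏt)` into a cube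
of side `2^{k+1}t` and a cube of side `t/√n` into `B(y,t)` yields
`w(B(y,2ᵏt)) ≤ C (2√n)^{nq} 2^{knq} w(B(y,t))`. Fubini needs `A_α(f)` to be jointly measurable in
`(y,t)`: it is a supremum of functions that are continuous for `t ≠ 0` by dominated convergence.
-/

open MeasureTheory ENNReal Real SchwartzMap FourierTransform

noncomputable section

abbrev Rn (n : ℕ) := EuclideanSpace ℝ (Fin n)

def cube {n : ℕ} (x₀ : Rn n) (r : ℝ) : Set (Rn n) :=
  {x | ∀ i, |x i - x₀ i| ≤ r / 2}

def wVol {n : ℕ} (w : Rn n → ℝ) (E : Set (Rn n)) : ℝ≥0∞ :=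
  ∫⁻ x in E, ENNReal.ofReal (w x)

def IsAqWith {n : ℕ} (w : Rn n → ℝ) (q : ℝ) (C : ℝ) : Prop :=
  (∀ x, 0 ≤ w x) ∧ (∀ᵐ x, 0 < w x) ∧ LocallyIntegrable w volume ∧
    ∀ (x₀ : Rn n) (r : ℝ), 0 < r →
      ((volume (cube x₀ r))⁻¹ * wVol w (cube x₀ r)) *
        ((volume (cube x₀ r))⁻¹ *
          ∫⁻ x in cube x₀ r, ENNReal.ofReal (w x ^ (-(1 : ℝ) / (q - 1)))) ^ (q - 1)
        ≤ ENNReal.ofReal C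

def IsAq {n : ℕ} (w : Rn n → ℝ) (q : ℝ) : Prop :=
  ∃ C : ℝ, 0 < C ∧ IsAqWith w q C

def IsAinfty {n : ℕ} (w : Rn n → ℝ) : Prop :=
  ∃ q : ℝ, 1 < q ∧ IsAq w q

def lpwNorm {n : ℕ} (w : Rn n → ℝ) (p : ℝ) (g : Rn n → ℝ≥0∞) : ℝ≥0∞ :=
  (∫⁻ x, g x ^ p * ENNReal.ofReal (w x)) ^ (1 / p)

def lqwNormF {n : ℕ} (w : Rn n → ℝ) (q : ℝ) (a : Rn n → ℝ) : ℝ≥0∞ :=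
  (∫⁻ x, ENNReal.ofReal (|a x| ^ q) * ENNReal.ofReal (w x)) ^ (1 / q)

/-- A `w`-`(p,q,0)`-atom supported in the cube `Q(x₀, r)`. -/
def IsWAtom {n : ℕ} (w : Rn n → ℝ) (p q : ℝ) (a : Rn n → ℝ) (x₀ : Rn n) (r : ℝ) : Prop :=
  Measurable a ∧ (∀ x, x ∉ cube x₀ r → a x = 0) ∧
    lqwNormF w q a ≤ (wVol w (cube x₀ r)) ^ (1 / q - 1 / p) ∧ (∫ x, a x) = 0

/- Schwartz space / tempered distributions -/

lemma hasTemperateGrowth_affine {n : ℕ} (c : Rn n) (L : Rn n →L[ℝ] Rn n) :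
    Function.HasTemperateGrowth (fun y : Rn n => c + L y) := by
  apply Function.HasTemperateGrowth.of_fderiv (k := 1) (C := ‖c‖ + ‖L‖)
  · have h : fderiv ℝ (fun y : Rn n => c + L y) = fun _ => L := by
      ext1 y
      have : HasFDerivAt (fun y : Rn n => c + L y) (0 + L) y :=
        (hasFDerivAt_const c y).add (L.hasFDerivAt)
      simpa using this.fderiv
    rw [h]
    exact Function.HasTemperateGrowth.const L
  · exact (differentiable_const c).add L.differentiable
  · intro x
    calc ‖c + L x‖ ≤ ‖c‖ + ‖L x‖ := norm_add_le _ _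
      _ ≤ ‖c‖ + ‖L‖ * ‖x‖ := by gcongr; exact L.le_opNorm x
      _ ≤ (‖c‖ + ‖L‖) * (1 + ‖x‖) ^ 1 := by
          rw [pow_one]
          nlinarith [norm_nonneg c, norm_nonneg (L : Rn n →L[ℝ] Rn n), norm_nonneg x]

/-- For `t ≠ 0`, the Schwartz function `y ↦ t^{-n} φ((x - y)/t) = φ_t(x - y)`;
for `t = 0` the junk value `0`. -/
def shiftDilate {n : ℕ} (φ : 𝓢(Rn n, ℝ)) (t : ℝ) (x : Rn n) : 𝓢(Rn n, ℝ) := by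
  classical
  by_cases h : t = 0
  · exact 0
  · refine (t ^ (-(n : ℤ))) • (SchwartzMap.compCLM (𝕜 := ℝ)
      (g := fun y : Rn n => t⁻¹ • (x - y)) ?_ ?_ φ)
    · have : (fun y : Rn n => t⁻¹ • (x - y))
          = fun y : Rn n => (t⁻¹ • x) + ((-t⁻¹) • (ContinuousLinearMap.id ℝ (Rn n))) y := by
        funext y
        simp [smul_sub, sub_eq_add_neg]
      rw [this]
      exact hasTemperateGrowth_affine _ _
    · refine ⟨1, ‖x‖ + |t|, fun y => ?_⟩
      have h1 : ‖x - y‖ = |t| * ‖t⁻¹ • (x - y)‖ := by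
        rw [norm_smul, norm_inv, Real.norm_eq_abs, ← mul_assoc,
          mul_inv_cancel₀ (by simpa using h), one_mul]
      have h0 : y = x - (x - y) := by abel
      calc ‖y‖ = ‖x - (x - y)‖ := by rw [← h0]
        _ ≤ ‖x‖ + ‖x - y‖ := norm_sub_le _ _
        _ = ‖x‖ + |t| * ‖t⁻¹ • (x - y)‖ := by rw [h1]
        _ ≤ (‖x‖ + |t|) * (1 + ‖t⁻¹ • (x - y)‖) ^ 1 := by
            have h2 : (0:ℝ) ≤ ‖t⁻¹ • (x - y)‖ := norm_nonneg _
            have h3 : (0:ℝ) ≤ ‖x‖ := norm_nonneg _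
            have h4 : (0:ℝ) ≤ |t| := abs_nonneg _
            nlinarith

/-- The convolution `f * φ_t (x)` of a tempered distribution `f` with the dilate `φ_t` of a
Schwartz function `φ`. -/
def distConv {n : ℕ} (f : 𝓢(Rn n, ℝ) →L[ℝ] ℝ) (φ : 𝓢(Rn n, ℝ)) (t : ℝ) (x : Rn n) : ℝ :=
  f (shiftDilate φ t x)

/-- The maximal function `M_φ f (x) = sup_{t > 0} |f * φ_t (x)|` of a tempered distribution. -/
def maxFun {n : ℕ} (φ : 𝓢(Rn n, ℝ)) (f : 𝓢(Rn n, ℝ) →L[ℝ] ℝ) (x : Rn n) : ℝ≥0∞ :=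
  ⨆ (t : ℝ) (_ : 0 < t), ENNReal.ofReal |distConv f φ t x|

/-- The norm of `f` in the weighted Hardy space `H^p_w`, defined through the
maximal function `M_φ f`. -/
def hardyNorm {n : ℕ} (w : Rn n → ℝ) (p : ℝ) (φ : 𝓢(Rn n, ℝ))
    (f : 𝓢(Rn n, ℝ) →L[ℝ] ℝ) : ℝ≥0∞ :=
  lpwNorm w p (maxFun φ f)

/-- Membership in the weighted Hardy space `H^p_w`. -/
def MemHp {n : ℕ} (w : Rn n → ℝ) (p : ℝ) (φ : 𝓢(Rn n, ℝ))
    (f : 𝓢(Rn n, ℝ) →L[ℝ] ℝ) : Prop :=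
  hardyNorm w p φ f < ∞

/-- A tempered distribution vanishes weakly at infinity if `f * φ_t → 0` as `t → ∞`
in the sense of distributions. -/
def VanishesWeaklyAtInfinity {n : ℕ} (f : 𝓢(Rn n, ℝ) →L[ℝ] ℝ) : Prop :=
  ∀ φ η : 𝓢(Rn n, ℝ),
    Filter.Tendsto (fun t : ℝ => ∫ x, distConv f φ t x * η x) Filter.atTop (nhds 0)

/- Lipschitz space `Lip(α,1,0)` -/

/-- The average `b_Q` of `b` over `Q`. -/
def cubeAvg {n : ℕ} (b : Rn n → ℝ) (Q : Set (Rn n)) : ℝ :=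
  (volume Q).toReal⁻¹ * ∫ y in Q, b y

/-- The `Lip(α,1,0)` norm `sup_Q |Q|^{-1-α/n} ∫_Q |b - b_Q|`. -/
def lipNorm (n : ℕ) (α : ℝ) (b : Rn n → ℝ) : ℝ≥0∞ :=
  ⨆ (x₀ : Rn n) (r : ℝ) (_ : 0 < r),
    (volume (cube x₀ r)) ^ (-(1 : ℝ) - α / n) *
      ∫⁻ y in cube x₀ r, ENNReal.ofReal |b y - cubeAvg b (cube x₀ r)|

/-- `F` realizes the tempered distribution `f` as an element of the dual of `Lip(α,1,0)`:
it is a linear functional, bounded with respect to the `Lip(α,1,0)` norm,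
which agrees with `f` on Schwartz functions. -/
def IsLipDualExt {n : ℕ} (α : ℝ) (f : 𝓢(Rn n, ℝ) →L[ℝ] ℝ)
    (F : (Rn n → ℝ) →ₗ[ℝ] ℝ) : Prop :=
  (∀ φ : 𝓢(Rn n, ℝ), F (φ : Rn n → ℝ) = f φ) ∧
    ∃ C : ℝ, 0 ≤ C ∧ ∀ b : Rn n → ℝ,
      ENNReal.ofReal |F b| ≤ ENNReal.ofReal C * lipNorm n α b

/- Intrinsic square functions -/

/-- The family `𝒞_α`. -/
def Calpha (n : ℕ) (α : ℝ) : Set (Rn n → ℝ) :=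
  {φ | Function.support φ ⊆ Metric.closedBall 0 1 ∧ (∫ x, φ x) = 0 ∧
    ∀ x x', |φ x - φ x'| ≤ ‖x - x'‖ ^ α}

/-- The family `𝒞_{(α,ε)}`. -/
def CalphaEps (n : ℕ) (α ε : ℝ) : Set (Rn n → ℝ) :=
  {φ | (∀ x, |φ x| ≤ (1 + ‖x‖) ^ (-(n : ℝ) - ε)) ∧
    (∀ x x', |φ x - φ x'| ≤
      ‖x - x'‖ ^ α * ((1 + ‖x‖) ^ (-(n : ℝ) - ε) + (1 + ‖x'‖) ^ (-(n : ℝ) - ε))) ∧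
    (∫ x, φ x) = 0}

/-- The kernel `z ↦ φ_t(y - z) = t^{-n} φ((y-z)/t)`. -/
def dilKer {n : ℕ} (φ : Rn n → ℝ) (t : ℝ) (y : Rn n) : Rn n → ℝ :=
  fun z => t ^ (-(n : ℤ)) * φ (t⁻¹ • (y - z))

/-- `A_α(f)(y,t)` for the functional `F` representing `f` on `Lip(α,1,0)`. -/
def intrA {n : ℕ} (α : ℝ) (F : (Rn n → ℝ) →ₗ[ℝ] ℝ) (y : Rn n) (t : ℝ) : ℝ≥0∞ :=
  ⨆ φ ∈ Calpha n α, ENNReal.ofReal |F (dilKer φ t y)|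

/-- `Ã_{(α,ε)}(f)(y,t)` for the functional `F` representing `f`. -/
def intrAEps {n : ℕ} (α ε : ℝ) (F : (Rn n → ℝ) →ₗ[ℝ] ℝ) (y : Rn n) (t : ℝ) : ℝ≥0∞ :=
  ⨆ φ ∈ CalphaEps n α ε, ENNReal.ofReal |F (dilKer φ t y)|

/-- `A_α(f)(y,t)` for a (locally integrable) function `f`. -/
def intrAf {n : ℕ} (α : ℝ) (f : Rn n → ℝ) (y : Rn n) (t : ℝ) : ℝ≥0∞ :=
  ⨆ φ ∈ Calpha n α, ENNReal.ofReal |∫ z, f z * dilKer φ t y z|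

/-- `Ã_{(α,ε)}(f)(y,t)` for a function `f`. -/
def intrAfEps {n : ℕ} (α ε : ℝ) (f : Rn n → ℝ) (y : Rn n) (t : ℝ) : ℝ≥0∞ :=
  ⨆ φ ∈ CalphaEps n α ε, ENNReal.ofReal |∫ z, f z * dilKer φ t y z|

/-- The `g`-type square function built from a generalized square-function kernel `A(y,t)`:
`x ↦ (∫_0^∞ A(x,t)² dt/t)^{1/2}`. -/
def gSF {n : ℕ} (A : Rn n → ℝ → ℝ≥0∞) (x : Rn n) : ℝ≥0∞ :=
  (∫⁻ t in Set.Ioi (0 : ℝ), (A x t) ^ 2 * (ENNReal.ofReal t)⁻¹) ^ (1 / (2 : ℝ))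

/-- The area-integral type square function of aperture `β`:
`x ↦ (∬_{|x-y| < βt} A(y,t)² dy dt/t^{n+1})^{1/2}`. -/
def sSF (n : ℕ) (β : ℝ) (A : Rn n → ℝ → ℝ≥0∞) (x : Rn n) : ℝ≥0∞ :=
  (∫⁻ t in Set.Ioi (0 : ℝ),
      (∫⁻ y in Metric.ball x (β * t), (A y t) ^ 2) * (ENNReal.ofReal (t ^ (n + 1)))⁻¹) ^
    (1 / (2 : ℝ))

/-- The `g^*_λ`-type square function:
`x ↦ (∬_{ℝ^{n+1}_+} (t/(t+|x-y|))^{λn} A(y,t)² dy dt/t^{n+1})^{1/2}`. -/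
def gStarSF (n : ℕ) (lam : ℝ) (A : Rn n → ℝ → ℝ≥0∞) (x : Rn n) : ℝ≥0∞ :=
  (∫⁻ t in Set.Ioi (0 : ℝ),
      (∫⁻ y, ENNReal.ofReal ((t / (t + ‖x - y‖)) ^ (lam * n)) * (A y t) ^ 2) *
        (ENNReal.ofReal (t ^ (n + 1)))⁻¹) ^ (1 / (2 : ℝ))

/-- The weighted maximal function `M_w`. -/
def wMaximal {n : ℕ} (w : Rn n → ℝ) (f : Rn n → ℝ) (x : Rn n) : ℝ≥0∞ :=
  ⨆ (x₀ : Rn n) (r : ℝ) (_ : 0 < r) (_ : x ∈ cube x₀ r),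
    (wVol w (cube x₀ r))⁻¹ * ∫⁻ y in cube x₀ r, ENNReal.ofReal |f y| * ENNReal.ofReal (w y)

lemma cube_mono {n : ℕ} (x₀ : Rn n) {r r' : ℝ} (h : r ≤ r') : cube x₀ r ⊆ cube x₀ r' :=
  fun _ hx i => (hx i).trans (by linarith)

lemma volume_cube {n : ℕ} (x₀ : Rn n) {r : ℝ} (hr : 0 ≤ r) :
    volume (cube x₀ r) = ENNReal.ofReal (r ^ n) := by
  have hbox : cube x₀ r = (MeasurableEquiv.toLp 2 (Fin n → ℝ)).symm ⁻¹'
      Set.univ.pi fun i => Set.Icc (x₀ i - r / 2) (x₀ i + r / 2) := by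
    ext x
    simp only [cube, Set.mem_ofPred_eq, Set.mem_preimage, Set.mem_univ_pi, Set.mem_Icc,
      MeasurableEquiv.coe_toLp_symm, abs_sub_le_iff]
    exact forall_congr' fun i => by constructor <;> rintro ⟨h₁, h₂⟩ <;> constructor <;> linarith
  rw [hbox, (EuclideanSpace.volume_preserving_symm_measurableEquiv_toLp (Fin n)).measure_preimage
    (MeasurableSet.univ_pi fun _ => measurableSet_Icc).nullMeasurableSet, volume_pi_pi]
  simp [ENNReal.ofReal_pow hr]

lemma ball_subset_cube {n : ℕ} (y : Rn n) (s : ℝ) : Metric.ball y s ⊆ cube y (2 * s) := by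
  intro x hx i
  have := (PiLp.norm_apply_le (x - y) i).trans_lt (mem_ball_iff_norm.1 hx)
  rw [PiLp.sub_apply, Real.norm_eq_abs] at this
  linarith

lemma cube_subset_ball {n : ℕ} (hn : 0 < n) (y : Rn n) {t : ℝ} (ht : 0 < t) :
    cube y (t / √n) ⊆ Metric.ball y t := by
  intro x hx
  have hn' : (0 : ℝ) < n := by exact_mod_cast hn
  have hcoord : ∀ i, dist (x i) (y i) ^ 2 ≤ t ^ 2 / (4 * n) := fun i => by
    rw [Real.dist_eq, sq_abs]
    have := sq_le_sq' (abs_le.1 (hx i)).1 (abs_le.1 (hx i)).2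
    rw [div_div, div_pow, mul_pow, Real.sq_sqrt hn'.le, mul_comm (n : ℝ)] at this
    norm_num at this
    exact this
  rw [Metric.mem_ball, EuclideanSpace.dist_eq, Real.sqrt_lt' ht]
  calc ∑ i, dist (x i) (y i) ^ 2 ≤ ∑ _i : Fin n, t ^ 2 / (4 * n) :=
        Finset.sum_le_sum fun i _ => hcoord i
    _ = t ^ 2 / 4 := by simp; field_simp
    _ < t ^ 2 := by nlinarith

section Muckenhoupt

variable {n : ℕ} {w : Rn n → ℝ} {q C : ℝ}

lemma volume_rpow_le_wVol_mul (hq : 1 < q) (hw : AEMeasurable w) (hpos : ∀ᵐ x, 0 < w x)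
    (E : Set (Rn n)) :
    volume E ^ q ≤
      wVol w E * (∫⁻ x in E, ENNReal.ofReal (w x ^ (-(1 : ℝ) / (q - 1)))) ^ (q - 1) := by
  have hpq : q.HolderConjugate q.conjExponent := .conjExponent hq
  have hq0 : 0 < q := by linarith
  set W : Rn n → ℝ≥0∞ := fun x => ENNReal.ofReal (w x)
  have hW : AEMeasurable W := ENNReal.measurable_ofReal.comp_aemeasurable hw
  have hHolder : volume E ≤ (∫⁻ x in E, (W x ^ (1 / q)) ^ q) ^ (1 / q) *
      (∫⁻ x in E, (W x ^ (-(1 / q))) ^ q.conjExponent) ^ (1 / q.conjExponent) := by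
    calc volume E = ∫⁻ x in E, W x ^ (1 / q) * W x ^ (-(1 / q)) := by
          rw [← setLIntegral_one]
          refine lintegral_congr_ae (ae_restrict_of_ae ?_)
          filter_upwards [hpos] with x hx
          rw [← ENNReal.rpow_add _ _ (by simpa [W] using hx) ENNReal.ofReal_ne_top]
          simp
      _ ≤ _ := ENNReal.lintegral_mul_le_Lp_mul_Lq _ hpq
          (hW.pow_const _).restrict (hW.pow_const _).restrict
  have hF : ∫⁻ x in E, (W x ^ (1 / q)) ^ q = wVol w E := by
    simp_rw [← ENNReal.rpow_mul, one_div_mul_cancel hq0.ne', ENNReal.rpow_one]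
    rfl
  have hG : ∫⁻ x in E, (W x ^ (-(1 / q))) ^ q.conjExponent =
      ∫⁻ x in E, ENNReal.ofReal (w x ^ (-(1 : ℝ) / (q - 1))) := by
    refine lintegral_congr_ae (ae_restrict_of_ae ?_)
    filter_upwards [hpos] with x hx
    rw [← ENNReal.rpow_mul, ENNReal.ofReal_rpow_of_pos hx, Real.conjExponent]
    congr 2
    field_simp
  calc volume E ^ q ≤ ((wVol w E) ^ (1 / q) *
        (∫⁻ x in E, ENNReal.ofReal (w x ^ (-(1 : ℝ) / (q - 1)))) ^ (1 / q.conjExponent)) ^ q := by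
        rw [← hF, ← hG]
        exact ENNReal.rpow_le_rpow hHolder hq0.le
    _ = _ := by
        rw [ENNReal.mul_rpow_of_nonneg _ _ hq0.le, ← ENNReal.rpow_mul, ← ENNReal.rpow_mul,
          one_div_mul_cancel hq0.ne', ENNReal.rpow_one, Real.conjExponent]
        congr 2
        field_simp

lemma IsAqWith.wVol_mul_volume_rpow_le (hw : IsAqWith w q C) (hq : 1 < q) (x₀ : Rn n) {r : ℝ}
    (hr : 0 < r) {E : Set (Rn n)} (hE : E ⊆ cube x₀ r) :
    wVol w (cube x₀ r) * volume E ^ q ≤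
      ENNReal.ofReal C * volume (cube x₀ r) ^ q * wVol w E := by
  obtain ⟨-, hpos, hloc, hAq⟩ := hw
  set Q := cube x₀ r
  set S := ∫⁻ x in Q, ENNReal.ofReal (w x ^ (-(1 : ℝ) / (q - 1)))
  have hQ0 : volume Q ≠ 0 := by
    simp [Q, volume_cube x₀ hr.le, ENNReal.ofReal_eq_zero, not_le, pow_pos hr]
  have hQ : volume Q ≠ ∞ := by simp [Q, volume_cube x₀ hr.le]
  have hAQ : wVol w Q * S ^ (q - 1) ≤ ENNReal.ofReal C * volume Q ^ q := by
    have h := hAq x₀ r hr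
    have hrearr : (volume Q)⁻¹ * wVol w Q * ((volume Q)⁻¹ * S) ^ (q - 1) =
        wVol w Q * S ^ (q - 1) / volume Q ^ q := by
      rw [ENNReal.mul_rpow_of_nonneg _ _ (by linarith), ENNReal.inv_rpow,
        ENNReal.rpow_sub _ _ hQ0 hQ, ENNReal.rpow_one,
        ENNReal.inv_div (Or.inl hQ) (Or.inl hQ0)]
      calc _ = ((volume Q)⁻¹ * volume Q) * (wVol w Q * S ^ (q - 1) / volume Q ^ q) := by
            simp only [div_eq_mul_inv]; ring
        _ = _ := by rw [ENNReal.inv_mul_cancel hQ0 hQ, one_mul]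
    rwa [hrearr, ENNReal.div_le_iff (by simp [hQ0, hQ]) (by simp [hQ0, hQ])] at h
  calc wVol w Q * volume E ^ q
      ≤ wVol w Q * (wVol w E * S ^ (q - 1)) := by
        gcongr
        exact (volume_rpow_le_wVol_mul hq hloc.aestronglyMeasurable.aemeasurable hpos E).trans
          (by gcongr; exact lintegral_mono_set hE)
    _ = wVol w Q * S ^ (q - 1) * wVol w E := by ring
    _ ≤ ENNReal.ofReal C * volume Q ^ q * wVol w E := by gcongr

lemma IsAqWith.wVol_ball_le (hw : IsAqWith w q C) (hn : 0 < n) (hq : 1 < q) (y : Rn n)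
    {a t : ℝ} (ha : 1 ≤ a) (ht : 0 < t) :
    wVol w (Metric.ball y (a * t)) ≤
      ENNReal.ofReal (C * (2 * √n) ^ (n * q) * a ^ (n * q)) * wVol w (Metric.ball y t) := by
  have hsn : 1 ≤ √(n : ℝ) := Real.one_le_sqrt.2 (by exact_mod_cast hn)
  set s := t / √n
  set R := 2 * (a * t)
  have hs : 0 < s := by positivity
  have hR : 0 < R := by positivity
  have hsR : s ≤ R := by
    calc s ≤ t := div_le_self ht.le hsn
      _ ≤ R := by nlinarith
  have hA := hw.wVol_mul_volume_rpow_le hq y hR (cube_mono y hsR)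
  rw [volume_cube y hs.le, volume_cube y hR.le, ENNReal.ofReal_rpow_of_pos (by positivity),
    ENNReal.ofReal_rpow_of_pos (by positivity), mul_right_comm (ENNReal.ofReal C),
    ← ENNReal.le_div_iff_mul_le (Or.inl (ENNReal.ofReal_pos.2 (by positivity)).ne')
      (Or.inl ENNReal.ofReal_ne_top), mul_div_assoc, ← ENNReal.ofReal_div_of_pos (by positivity),
    mul_right_comm, ← ENNReal.ofReal_mul' (by positivity)] at hA
  have hratio : C * ((R ^ n) ^ q / (s ^ n) ^ q) = C * (2 * √n) ^ (n * q) * a ^ (n * q) := by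
    rw [← Real.div_rpow (by positivity) (by positivity), ← div_pow, ← Real.rpow_natCast,
      ← Real.rpow_mul (by positivity), mul_assoc, ← Real.mul_rpow (by positivity) (by positivity)]
    congr 2
    simp only [R, s]
    field_simp
  calc wVol w (Metric.ball y (a * t)) ≤ wVol w (cube y R) :=
        lintegral_mono_set (ball_subset_cube y _)
    _ ≤ _ := hA
    _ ≤ _ := by
        rw [hratio]
        gcongr
        exact lintegral_mono_set (cube_subset_ball hn y ht)

end Muckenhoupt

section IntrinsicKernel

variable {n : ℕ} {α : ℝ}

lemma Calpha.continuous (hα : 0 < α) {φ : Rn n → ℝ} (hφ : φ ∈ Calpha n α) : Continuous φ := by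
  refine Metric.continuous_iff.2 fun x ε hε => ⟨ε ^ α⁻¹, by positivity, fun x' hx' => ?_⟩
  calc dist (φ x') (φ x) ≤ dist x' x ^ α := by
        rw [Real.dist_eq, dist_eq_norm]; exact hφ.2.2 x' x
    _ < (ε ^ α⁻¹) ^ α := Real.rpow_lt_rpow dist_nonneg hx' hα
    _ = ε := Real.rpow_inv_rpow hε.le hα.ne'

lemma Calpha.exists_abs_le (hα : 0 < α) {φ : Rn n → ℝ} (hφ : φ ∈ Calpha n α) :
    ∃ M, ∀ x, |φ x| ≤ M :=
  (HasCompactSupport.intro (isCompact_closedBall 0 1) fun _ hx =>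
    Function.notMem_support.1 (mt (hφ.1 ·) hx)).exists_bound_of_continuous
      (Calpha.continuous hα hφ)

lemma dilKer_zero (hn : 0 < n) (φ : Rn n → ℝ) (y : Rn n) : dilKer φ 0 y = 0 := by
  ext z
  simp [dilKer, zero_zpow _ (neg_ne_zero.2 (Int.natCast_ne_zero.2 hn.ne'))]

lemma dilKer_eq_zero_of_lt_dist {φ : Rn n → ℝ} (hφ : Function.support φ ⊆ Metric.closedBall 0 1)
    {t : ℝ} (ht : t ≠ 0) {y z : Rn n} (h : |t| < dist y z) : dilKer φ t y z = 0 := by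
  suffices φ (t⁻¹ • (y - z)) = 0 by simp [dilKer, this]
  refine Function.notMem_support.1 fun hmem => ?_
  have := hφ hmem
  rw [mem_closedBall_zero_iff, norm_smul, norm_inv, Real.norm_eq_abs,
    inv_mul_le_iff₀ (abs_pos.2 ht), mul_one, ← dist_eq_norm] at this
  linarith

lemma abs_dilKer_le {φ : Rn n → ℝ} {M : ℝ} (hM : ∀ x, |φ x| ≤ M) {s t : ℝ} (hs : 0 < s)
    (hst : s ≤ |t|) (y z : Rn n) : |dilKer φ t y z| ≤ s ^ (-(n : ℤ)) * M := by
  rw [dilKer, abs_mul, abs_zpow, zpow_neg, zpow_neg, zpow_natCast, zpow_natCast]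
  exact mul_le_mul (inv_anti₀ (by positivity) (pow_le_pow_left₀ hs.le hst n)) (hM _)
    (abs_nonneg _) (by positivity)

lemma continuousAt_integral_mul_dilKer (hα : 0 < α) {f : Rn n → ℝ}
    (hf : LocallyIntegrable f volume) {φ : Rn n → ℝ} (hφ : φ ∈ Calpha n α)
    {y₀ : Rn n} {t₀ : ℝ} (ht₀ : t₀ ≠ 0) :
    ContinuousAt (fun p : Rn n × ℝ => ∫ z, f z * dilKer φ p.2 p.1 z) (y₀, t₀) := by
  obtain ⟨M, hM⟩ := Calpha.exists_abs_le hα hφ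
  have hM0 : 0 ≤ M := (abs_nonneg _).trans (hM 0)
  have hφc := Calpha.continuous hα hφ
  have ht₀' : 0 < |t₀| := abs_pos.2 ht₀
  set K := Metric.closedBall y₀ (1 + 2 * |t₀|)
  -- near `(y₀, t₀)` the kernel is bounded and supported in the compact set `K`
  have hU : {p : Rn n × ℝ | dist p.1 y₀ < 1 ∧ |t₀| / 2 < |p.2| ∧ |p.2| < 2 * |t₀|} ∈
      nhds (y₀, t₀) :=
    IsOpen.mem_nhds ((isOpen_lt (by fun_prop) continuous_const).and
      ((isOpen_lt continuous_const (by fun_prop)).and (isOpen_lt (by fun_prop) continuous_const)))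
      ⟨by simp, by linarith, by linarith⟩
  refine continuousAt_of_dominated
    (bound := K.indicator fun z => (|t₀| / 2) ^ (-(n : ℤ)) * M * |f z|) ?_ ?_ ?_ ?_
  · exact Filter.Eventually.of_forall fun p => hf.aestronglyMeasurable.mul
      (by unfold dilKer; fun_prop)
  · filter_upwards [hU] with p ⟨hp₁, hp₂, hp₃⟩
    refine Filter.Eventually.of_forall fun z => ?_
    rw [Real.norm_eq_abs, abs_mul]
    by_cases hz : |p.2| < dist p.1 z
    · rw [dilKer_eq_zero_of_lt_dist hφ.1 (abs_pos.1 (by linarith)) hz, abs_zero, mul_zero]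
      exact Set.indicator_nonneg (fun _ _ => by positivity) z
    · have hzK : z ∈ K := by
        rw [Metric.mem_closedBall, dist_comm]
        linarith [dist_triangle y₀ p.1 z, dist_comm p.1 y₀]
      rw [Set.indicator_of_mem hzK, mul_comm _ |f z|]
      exact mul_le_mul_of_nonneg_left (abs_dilKer_le hM (by positivity) hp₂.le _ _)
        (abs_nonneg _)
  · exact (integrable_indicator_iff Metric.isClosed_closedBall.measurableSet).2
      ((hf.integrableOn_isCompact (isCompact_closedBall _ _)).norm.const_mul _)
  · refine Filter.Eventually.of_forall fun z => continuousAt_const.mul ?_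
    unfold dilKer
    have hsnd : ContinuousAt Prod.snd (y₀, t₀) := continuousAt_snd
    exact ((continuousAt_zpow₀ _ _ (Or.inl ht₀)).comp hsnd).mul
      (hφc.continuousAt.comp (((continuousAt_inv₀ ht₀).comp hsnd).smul
        (continuousAt_fst.sub continuousAt_const)))

lemma measurable_intrAf (hn : 0 < n) (hα : 0 < α) {f : Rn n → ℝ}
    (hf : LocallyIntegrable f volume) : Measurable (Function.uncurry (intrAf α f)) := by
  have hlsc : ∀ φ ∈ Calpha n α, LowerSemicontinuous
      fun p : Rn n × ℝ => ENNReal.ofReal |∫ z, f z * dilKer φ p.2 p.1 z| := by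
    intro φ hφ p
    rcases eq_or_ne p.2 0 with h0 | h0
    · -- `0 ^ (-n) = 0` makes every term vanish at `t = 0`
      intro c hc
      simp [h0, dilKer_zero hn] at hc
    · exact (ENNReal.continuous_ofReal.continuousAt.comp
        (continuousAt_integral_mul_dilKer hα hf hφ h0).abs).lowerSemicontinuousAt
  have : Function.uncurry (intrAf α f) = fun p => ⨆ φ : Calpha n α,
      ENNReal.ofReal |∫ z, f z * dilKer (φ : Rn n → ℝ) p.2 p.1 z| := by
    ext p
    rw [Function.uncurry_apply_pair, intrAf, iSup_subtype']
  rw [this]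
  exact (lowerSemicontinuous_iSup fun φ : Calpha n α => hlsc φ φ.2).measurable

end IntrinsicKernel

section BallFubini

variable {X : Type*} [PseudoMetricSpace X] [MeasurableSpace X] [OpensMeasurableSpace X]
  [SecondCountableTopology X] {μ : Measure X} [SFinite μ]

lemma lintegral_setLIntegral_ball_mul {g W : X → ℝ≥0∞} (hg : AEMeasurable g μ)
    (hW : AEMeasurable W μ) (r : ℝ) :
    ∫⁻ x, (∫⁻ y in Metric.ball x r, g y ∂μ) * W x ∂μ =
      ∫⁻ y, g y * ∫⁻ x in Metric.ball y r, W x ∂μ ∂μ := by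
  have hmeas : MeasurableSet {p : X × X | dist p.2 p.1 < r} :=
    measurableSet_lt (by fun_prop) measurable_const
  set F : X × X → ℝ≥0∞ := {p | dist p.2 p.1 < r}.indicator fun p => g p.2 * W p.1
  calc ∫⁻ x, (∫⁻ y in Metric.ball x r, g y ∂μ) * W x ∂μ = ∫⁻ x, ∫⁻ y, F (x, y) ∂μ ∂μ := by
        refine lintegral_congr fun x => ?_
        rw [← lintegral_mul_const'' _ hg.restrict,
          ← lintegral_indicator Metric.isOpen_ball.measurableSet]
        rfl
    _ = ∫⁻ y, ∫⁻ x, F (x, y) ∂μ ∂μ :=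
        lintegral_lintegral_swap ((hg.comp_snd.mul hW.comp_fst).indicator hmeas)
    _ = ∫⁻ y, g y * ∫⁻ x in Metric.ball y r, W x ∂μ ∂μ := by
        refine lintegral_congr fun y => ?_
        rw [← lintegral_const_mul'' _ hW.restrict,
          ← lintegral_indicator Metric.isOpen_ball.measurableSet]
        refine lintegral_congr fun x => ?_
        simp only [F, Set.indicator, Set.mem_ofPred_eq, Metric.mem_ball, dist_comm]

lemma measurable_setLIntegral_ball {A : X × ℝ → ℝ≥0∞} (hA : Measurable A) (β : ℝ) :
    Measurable fun p : X × ℝ => ∫⁻ y in Metric.ball p.1 (β * p.2), A (y, p.2) ∂μ := by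
  have hmeas : MeasurableSet {q : (X × ℝ) × X | dist q.2 q.1.1 < β * q.1.2} :=
    measurableSet_lt (by fun_prop) (by fun_prop)
  simp_rw [← lintegral_indicator Metric.isOpen_ball.measurableSet]
  exact Measurable.lintegral_prod_right'
    ((hA.comp (measurable_snd.prodMk (measurable_snd.comp measurable_fst))).indicator hmeas)

end BallFubini

lemma lintegral_sSF_rpow_two_mul {n : ℕ} {A : Rn n → ℝ → ℝ≥0∞}
    (hA : Measurable (Function.uncurry A)) {W : Rn n → ℝ≥0∞} (hW : AEMeasurable W) (β : ℝ) :
    ∫⁻ x, sSF n β A x ^ (2 : ℝ) * W x =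
      ∫⁻ t in Set.Ioi 0, (∫⁻ y, A y t ^ 2 * ∫⁻ x in Metric.ball y (β * t), W x) *
        (ENNReal.ofReal (t ^ (n + 1)))⁻¹ := by
  set c : ℝ → ℝ≥0∞ := fun t => (ENNReal.ofReal (t ^ (n + 1)))⁻¹
  have hc : Measurable c := by fun_prop
  have hB : Measurable fun p : Rn n × ℝ => ∫⁻ y in Metric.ball p.1 (β * p.2), A y p.2 ^ 2 :=
    measurable_setLIntegral_ball (hA.pow_const 2) β
  calc ∫⁻ x, sSF n β A x ^ (2 : ℝ) * W x
      = ∫⁻ x, ∫⁻ t in Set.Ioi 0, (∫⁻ y in Metric.ball x (β * t), A y t ^ 2) * c t * W x := by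
        refine lintegral_congr fun x => ?_
        rw [sSF, ← ENNReal.rpow_mul, one_div_mul_cancel two_ne_zero, ENNReal.rpow_one]
        exact (lintegral_mul_const'' _ ((hB.comp measurable_prodMk_left).mul hc).aemeasurable).symm
    _ = ∫⁻ t in Set.Ioi 0, ∫⁻ x, (∫⁻ y in Metric.ball x (β * t), A y t ^ 2) * c t * W x :=
        lintegral_lintegral_swap
          ((hB.mul (hc.comp measurable_snd)).aemeasurable.mul hW.comp_fst)
    _ = _ := by
        refine lintegral_congr fun t => ?_
        simp_rw [mul_right_comm _ (c t)]
        rw [lintegral_mul_const'' _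
            (by exact (hB.comp measurable_prodMk_right).aemeasurable.mul hW),
          lintegral_setLIntegral_ball_mul
            (by exact ((hA.comp measurable_prodMk_right).pow_const 2).aemeasurable) hW]

lemma lpwNorm_sSF_le_of_wVol_ball_le {n : ℕ} {A : Rn n → ℝ → ℝ≥0∞}
    (hA : Measurable (Function.uncurry A)) {w : Rn n → ℝ} (hw : AEMeasurable w) {β γ : ℝ}
    {D : ℝ≥0∞} (hD : D ≠ ∞)
    (hball : ∀ y, ∀ t > 0, wVol w (Metric.ball y (β * t)) ≤ D * wVol w (Metric.ball y (γ * t))) :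
    lpwNorm w 2 (sSF n β A) ≤ D ^ (1 / 2 : ℝ) * lpwNorm w 2 (sSF n γ A) := by
  have hW : AEMeasurable fun x => ENNReal.ofReal (w x) :=
    ENNReal.measurable_ofReal.comp_aemeasurable hw
  rw [lpwNorm, lpwNorm, ← ENNReal.mul_rpow_of_nonneg _ _ (by norm_num),
    lintegral_sSF_rpow_two_mul hA hW, lintegral_sSF_rpow_two_mul hA hW,
    ← lintegral_const_mul' _ _ hD]
  refine ENNReal.rpow_le_rpow (setLIntegral_mono' measurableSet_Ioi fun t ht => ?_) (by norm_num)
  rw [← mul_assoc, ← lintegral_const_mul' _ _ hD]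
  refine mul_le_mul_left (lintegral_mono fun y => ?_) _
  rw [mul_left_comm]
  gcongr
  exact hball y t ht

theorem varying_aperture_square_function_L2_bound_general
    {n : ℕ} (hn : 0 < n) (α q : ℝ) (hα0 : 0 < α) (hq : 1 < q)
    (w : Rn n → ℝ) (hw : IsAq w q) :
    ∃ C : ℝ, 0 < C ∧ ∀ f : Rn n → ℝ, LocallyIntegrable f volume →
      ∀ k : ℕ, 1 ≤ k →
      lpwNorm w 2 (sSF n ((2 : ℝ) ^ k) (intrAf α f)) ≤
        ENNReal.ofReal (C * (2 : ℝ) ^ ((k : ℝ) * n * q / 2)) *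
          lpwNorm w 2 (sSF n 1 (intrAf α f)) := by
  obtain ⟨C₀, hC₀, hAq⟩ := hw
  set K := C₀ * (2 * √n) ^ (n * q)
  have hK : 0 < K := by
    have : (0 : ℝ) < √n := Real.sqrt_pos.2 (by exact_mod_cast hn)
    positivity
  refine ⟨K ^ (1 / 2 : ℝ), by positivity, fun f hf k _ => ?_⟩
  have hconst : ENNReal.ofReal (K * ((2 : ℝ) ^ k) ^ (n * q)) ^ (1 / 2 : ℝ) =
      ENNReal.ofReal (K ^ (1 / 2 : ℝ) * 2 ^ ((k : ℝ) * n * q / 2)) := by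
    rw [ENNReal.ofReal_rpow_of_nonneg (by positivity) (by norm_num),
      Real.mul_rpow hK.le (by positivity), ← Real.rpow_natCast, ← Real.rpow_mul zero_le_two,
      ← Real.rpow_mul zero_le_two]
    ring_nf
  rw [← hconst]
  refine lpwNorm_sSF_le_of_wVol_ball_le (measurable_intrAf hn hα0 hf)
    hAq.2.2.1.aestronglyMeasurable.aemeasurable ENNReal.ofReal_ne_top fun y t ht => ?_
  rw [one_mul]
  exact hAq.wVol_ball_le hn hq y (one_le_pow₀ one_le_two) ht

/-- Let `0 < α ≤ 1`, `q > 1` and `w ∈ A_q`. Then there exists a constant `C > 0`,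
independent of `k` and `f`, such that for every locally integrable function `f` and every
integer `k ≥ 1`, `‖S_{α,2ᵏ}(f)‖_{L²_w} ≤ C · 2^{knq/2} · ‖S_α(f)‖_{L²_w}`. -/
theorem varying_aperture_square_function_L2_bound
    {n : ℕ} (hn : 0 < n) (α q : ℝ) (hα0 : 0 < α) (hα1 : α ≤ 1) (hq : 1 < q)
    (w : Rn n → ℝ) (hw : IsAq w q) :
    ∃ C : ℝ, 0 < C ∧ ∀ f : Rn n → ℝ, LocallyIntegrable f volume →
      ∀ k : ℕ, 1 ≤ k →
      lpwNorm w 2 (sSF n ((2 : ℝ) ^ k) (intrAf α f)) ≤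
        ENNReal.ofReal (C * (2 : ℝ) ^ ((k : ℝ) * n * q / 2)) *
          lpwNorm w 2 (sSF n 1 (intrAf α f)) :=
  varying_aperture_square_function_L2_bound_general hn α q hα0 hq w hw
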